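/- arXiv:2506.04126 — 6 statements merged into one kernel-verified Lean document; each statement's English description precedes it below -/
import Mathlib

section
/- Let 0 < μ, let n, K be positive integers with nK ≥ 2, and let G > 0. Set x₀ = G/(μ√K). Then for any step size η with 0 < η < 1/(μnK), the iterate x = (1 − ημ)^{nK} x₀ satisfies x ≥ G/(4μ√K), and hence (μ/2)x² ≥ G²/(32μK). -/
lemma exp_chord (x : ℝ) (hx0 : 0 ≤ x) (hx2 : x ≤ 1/2) :
    Real.exp (-(2 * x * Real.log 2)) ≤ 1 - x := by
  have h := convexOn_exp.2 (Set.mem_univ (-Real.log 2)) (Set.mem_univ 0)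
    (by linarith : (0:ℝ) ≤ 2*x) (by linarith : (0:ℝ) ≤ 1 - 2*x) (by ring)
  simp only [smul_eq_mul, mul_zero, add_zero, Real.exp_zero] at h
  have he : Real.exp (-Real.log 2) = 1/2 := by
    rw [Real.exp_neg, Real.exp_log (by norm_num)]; norm_num
  rw [he] at h
  calc Real.exp (-(2 * x * Real.log 2)) = Real.exp (2*x * -Real.log 2) := by ring_nf
    _ ≤ 2*x * (1/2) + (1 - 2*x) * 1 := h
    _ = 1 - x := by ring

lemma quarter_le (m : ℕ) (x : ℝ) (hx0 : 0 ≤ x) (hmx : m * x ≤ 1) (hm : 2 ≤ m) :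
    (1/4 : ℝ) ≤ (1 - x) ^ m := by
  have hm2 : (2:ℝ) ≤ m := by exact_mod_cast hm
  have hx2 : x ≤ 1/2 := by nlinarith
  have h1 : Real.exp (-(2 * x * Real.log 2)) ≤ 1 - x := exp_chord x hx0 hx2
  have h2 : Real.exp (-(2 * x * Real.log 2)) ^ m ≤ (1 - x) ^ m :=
    pow_le_pow_left₀ (Real.exp_pos _).le h1 m
  have h3 : Real.exp (-(2 * x * Real.log 2)) ^ m
      = Real.exp (-(2 * (m * x) * Real.log 2)) := by
    rw [← Real.exp_nat_mul]; ring_nf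
  have hlog2 : 0 < Real.log 2 := Real.log_pos (by norm_num)
  have h4 : Real.exp (-(2 * Real.log 2)) ≤ Real.exp (-(2 * (m * x) * Real.log 2)) := by
    apply Real.exp_le_exp.2; nlinarith
  have h5 : Real.exp (-(2 * Real.log 2)) = 1/4 := by
    rw [show -(2 * Real.log 2) = (2:ℕ) * -Real.log 2 by push_cast; ring,
      Real.exp_nat_mul, Real.exp_neg, Real.exp_log (by norm_num)]
    norm_num
  calc (1/4 : ℝ) = Real.exp (-(2 * Real.log 2)) := h5.symm
    _ ≤ Real.exp (-(2 * (m * x) * Real.log 2)) := h4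
    _ = Real.exp (-(2 * x * Real.log 2)) ^ m := h3.symm
    _ ≤ (1 - x) ^ m := h2

theorem small_stepsize_lb (μ G : ℝ) (n K : ℕ) (hμ : 0 < μ) (hG : 0 < G)
    (hn : 0 < n) (hK : 0 < K) (hnK : 2 ≤ n * K)
    (η : ℝ) (hη : 0 < η) (hη' : η < 1 / (μ * n * K)) :
    (1 - η * μ) ^ (n * K) * (G / (μ * Real.sqrt K)) ≥ G / (4 * μ * Real.sqrt K) ∧
    (μ / 2) * ((1 - η * μ) ^ (n * K) * (G / (μ * Real.sqrt K))) ^ 2 ≥ G ^ 2 / (32 * μ * K) := by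
  have hnK0 : (0:ℝ) < (n:ℝ) * K := by positivity
  have hx0 : 0 ≤ η * μ := by positivity
  have hmx : ((n * K : ℕ) : ℝ) * (η * μ) ≤ 1 := by
    push_cast
    have : η * (μ * n * K) < 1 := by
      have := (lt_div_iff₀ (by positivity : (0:ℝ) < μ * n * K)).1 hη'
      linarith
    nlinarith
  have hq : (1/4 : ℝ) ≤ (1 - η * μ) ^ (n * K) := quarter_le (n*K) (η*μ) hx0 hmx hnK
  have hsK : 0 < Real.sqrt K := Real.sqrt_pos.2 (by positivity)
  have hpos : 0 < G / (μ * Real.sqrt K) := by positivity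
  have h1 : (1 - η * μ) ^ (n * K) * (G / (μ * Real.sqrt K)) ≥ G / (4 * μ * Real.sqrt K) := by
    have := mul_le_mul_of_nonneg_right hq hpos.le
    calc G / (4 * μ * Real.sqrt K) = (1/4) * (G / (μ * Real.sqrt K)) := by
          field_simp
      _ ≤ _ := this
  refine ⟨h1, ?_⟩
  have hb : 0 < G / (4 * μ * Real.sqrt K) := by positivity
  have hsq : ((1 - η * μ) ^ (n * K) * (G / (μ * Real.sqrt K))) ^ 2
      ≥ (G / (4 * μ * Real.sqrt K)) ^ 2 := by
    apply pow_le_pow_left₀ hb.le h1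
  have hsqK : Real.sqrt K ^ 2 = (K:ℝ) := Real.sq_sqrt (by positivity)
  have heq : (μ/2) * (G / (4 * μ * Real.sqrt K)) ^ 2 = G ^ 2 / (32 * μ * K) := by
    rw [div_pow, mul_pow, mul_pow, hsqK]
    field_simp
    ring
  calc G ^ 2 / (32 * μ * K) = (μ/2) * (G / (4 * μ * Real.sqrt K)) ^ 2 := heq.symm
    _ ≤ (μ/2) * ((1 - η * μ) ^ (n * K) * (G / (μ * Real.sqrt K))) ^ 2 := by
        apply mul_le_mul_of_nonneg_left hsq (by positivity)
end

section
/- Let μ, G > 0 and let n (even, n ≥ 2) and K ≥ 1 be integers. Suppose a sequence satisfies the closed form x_n^K = (1 − ημK)^{nK} x₀ + (G/(μK)) · [(1 − (1 − ημK)^{n/2})/(1 + (1 − ημK)^{n/2})] · (1 − (1 − ημK)^{nK}) with x₀ = 0, and suppose 1/n ≤ ημK ≤ 1. Then x_n^K ≥ (1 − e^{−1})(1 − e^{−1/2}) G / (2μK). -/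
theorem igd_even_closed_form_lb (μ G η : ℝ) (n K : ℕ) (hμ : 0 < μ) (hG : 0 < G)
    (hn : 2 ≤ n) (hne : Even n) (hK : 1 ≤ K)
    (h₁ : 1 / (n : ℝ) ≤ η * μ * K) (h₂ : η * μ * K ≤ 1)
    (x : ℝ)
    (hx : x = (1 - η * μ * K) ^ (n * K) * (0 : ℝ) +
      (G / (μ * K)) * ((1 - (1 - η * μ * K) ^ (n / 2)) / (1 + (1 - η * μ * K) ^ (n / 2))) *
        (1 - (1 - η * μ * K) ^ (n * K))) :
    x ≥ (1 - Real.exp (-1)) * (1 - Real.exp (-(1 / 2))) * G / (2 * μ * K) := by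
  obtain ⟨m, hm⟩ := hne
  have hmn : n = 2 * m := by omega
  have hm1 : 1 ≤ m := by omega
  have hnpos : (0:ℝ) < n := by positivity
  have hKpos : (0:ℝ) < K := by exact_mod_cast Nat.pos_of_ne_zero (by omega)
  set t := η * μ * K with ht
  have hr0 : (0:ℝ) ≤ 1 - t := by linarith
  have hexp : 1 - t ≤ Real.exp (-(1/(n:ℝ))) := by
    have h := Real.add_one_le_exp (-(1/(n:ℝ)))
    linarith
  have key : ∀ k : ℕ, (1 - t)^k ≤ Real.exp (-((k:ℝ)/(n:ℝ))) := by
    intro k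
    calc (1-t)^k ≤ (Real.exp (-(1/(n:ℝ))))^k := pow_le_pow_left₀ hr0 hexp k
    _ = Real.exp ((k:ℝ) * (-(1/(n:ℝ)))) := (Real.exp_nat_mul _ k).symm
    _ = Real.exp (-((k:ℝ)/(n:ℝ))) := by ring_nf
  have ha : (1 - t)^(n/2) ≤ Real.exp (-(1/2)) := by
    have h := key (n/2)
    have hc : ((n/2 : ℕ) : ℝ) / (n:ℝ) = 1/2 := by
      have : n / 2 = m := by omega
      rw [this, hmn]
      push_cast
      have hm0 : (0:ℝ) < (m:ℝ) := by exact_mod_cast hm1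
      field_simp
    rwa [hc] at h
  have hb : (1 - t)^(n*K) ≤ Real.exp (-1) := by
    have h := key (n*K)
    have hc : -(((n*K : ℕ) : ℝ) / (n:ℝ)) ≤ -1 := by
      have hK1 : (1:ℝ) ≤ (K:ℝ) := by exact_mod_cast hK
      push_cast
      rw [neg_le_neg_iff, le_div_iff₀ hnpos]
      nlinarith
    exact h.trans (Real.exp_le_exp.mpr hc)
  have ha0 : 0 ≤ (1 - t)^(n/2) := pow_nonneg hr0 _
  have hb0 : 0 ≤ (1 - t)^(n*K) := pow_nonneg hr0 _
  have he1 : Real.exp (-(1/2)) < 1 := by rw [show (1:ℝ) = Real.exp 0 by simp]; exact Real.exp_lt_exp.mpr (by norm_num)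
  have he2 : Real.exp (-1) < 1 := by rw [show (1:ℝ) = Real.exp 0 by simp]; exact Real.exp_lt_exp.mpr (by norm_num)
  set a := (1 - t)^(n/2)
  set b := (1 - t)^(n*K)
  have hC : 0 < G / (μ * K) := by positivity
  have hfrac : (1 - Real.exp (-(1/2))) / 2 ≤ (1 - a) / (1 + a) := by
    rw [div_le_div_iff₀ (by norm_num) (by linarith)]
    nlinarith
  have hfrac0 : 0 ≤ (1 - Real.exp (-(1/2))) / 2 := by linarith
  have hmain : G / (μ * K) * ((1 - Real.exp (-(1/2))) / 2) * (1 - Real.exp (-1)) ≤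
      G / (μ * K) * ((1 - a) / (1 + a)) * (1 - b) := by
    have h1 : G / (μ * K) * ((1 - Real.exp (-(1/2))) / 2) ≤ G / (μ * K) * ((1 - a) / (1 + a)) :=
      mul_le_mul_of_nonneg_left hfrac (le_of_lt hC)
    have h2 : (1 - Real.exp (-1)) ≤ (1 - b) := by linarith
    have h3 : 0 ≤ G / (μ * K) * ((1 - Real.exp (-(1/2))) / 2) := by positivity
    nlinarith
  have heq : (1 - Real.exp (-1)) * (1 - Real.exp (-(1 / 2))) * G / (2 * μ * K) =
      G / (μ * K) * ((1 - Real.exp (-(1/2))) / 2) * (1 - Real.exp (-1)) := by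
    field_simp
  rw [hx, heq]
  simpa using hmain
end

section
/- Let μ, G > 0, let n ≥ 2 be an integer and K ≥ 1 an integer. Suppose x_n^K = (1 − ημK)^{nK} x₀ + (G/(μK)) · [(1 − (1−ημK)^{nK})/(1 − (1−ημK)^n)] · (1 − (1 − ημK)^{(n−1)/2})² with x₀ = 0 and 1/n ≤ ημK ≤ 1. Then x_n^K ≥ (G/(μK)) (1 − e^{−1})(1 − e^{−1/4})². -/
/-!
Write `r = 1 - ημK ∈ [0, 1 - 1/n]`. Since `1 - 1/n ≤ e^{-1/n}`, every power `r^t` is at most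
`e^{-t/n}`; hence `r^(nK) ≤ r^n ≤ e^{-1}` and `r^((n-1)/2) ≤ e^{-(n-1)/(2n)} ≤ e^{-1/4}` for `n ≥ 2`.
The geometric factor `(1 - r^(nK)) / (1 - r^n)` is at least its numerator, so it is at least
`1 - e^{-1}`, and the remaining factor `(1 - r^((n-1)/2))^2` is at least `(1 - e^{-1/4})^2`.
-/

open Real

lemma rpow_le_exp_neg_div_of_le_one_sub_inv {r n t : ℝ} (hr₀ : 0 ≤ r) (hr : r ≤ 1 - 1 / n)
    (ht : 0 ≤ t) : r ^ t ≤ exp (-(t / n)) :=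
  calc r ^ t ≤ exp (-(1 / n)) ^ t := by
        gcongr
        linarith [add_one_le_exp (-(1 / n))]
    _ = exp (-(t / n)) := by rw [← exp_mul]; ring_nf

lemma pow_le_exp_neg_one_of_le_one_sub_inv {r : ℝ} {n : ℕ} (hn : n ≠ 0) (hr₀ : 0 ≤ r)
    (hr : r ≤ 1 - 1 / n) : r ^ n ≤ exp (-1) := by
  have hdiv : (n : ℝ) / n = 1 := div_self (Nat.cast_ne_zero.mpr hn)
  simpa [← rpow_natCast, hdiv] using
    rpow_le_exp_neg_div_of_le_one_sub_inv hr₀ hr (Nat.cast_nonneg n)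

lemma rpow_half_pred_le_exp_neg_quarter {r : ℝ} {n : ℕ} (hn : 2 ≤ n) (hr₀ : 0 ≤ r)
    (hr : r ≤ 1 - 1 / n) : r ^ (((n : ℝ) - 1) / 2) ≤ exp (-(1 / 4)) := by
  have hn' : (2 : ℝ) ≤ n := by exact_mod_cast hn
  calc r ^ (((n : ℝ) - 1) / 2) ≤ exp (-(((n : ℝ) - 1) / 2 / n)) :=
        rpow_le_exp_neg_div_of_le_one_sub_inv hr₀ hr (by linarith)
    _ ≤ exp (-(1 / 4)) := by
        rw [exp_le_exp, neg_le_neg_iff, le_div_iff₀ (by linarith)]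
        linarith

lemma one_sub_exp_neg_one_le_geom_ratio {r : ℝ} {n K : ℕ} (hn : n ≠ 0) (hK : 1 ≤ K)
    (hr₀ : 0 ≤ r) (hr : r ≤ 1 - 1 / n) :
    1 - exp (-1) ≤ (1 - r ^ (n * K)) / (1 - r ^ n) := by
  have hr₁ : r < 1 := by
    have : (0 : ℝ) < 1 / n := by positivity
    linarith
  have hnK : r ^ (n * K) ≤ r ^ n :=
    pow_le_pow_of_le_one hr₀ hr₁.le (Nat.le_mul_of_pos_right n hK)
  have hpow : r ^ n ≤ exp (-1) := pow_le_exp_neg_one_of_le_one_sub_inv hn hr₀ hr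
  have hpow₁ : r ^ n < 1 := pow_lt_one₀ hr₀ hr₁ hn
  calc 1 - exp (-1) ≤ 1 - r ^ (n * K) := by linarith
    _ ≤ (1 - r ^ (n * K)) / (1 - r ^ n) :=
        le_div_self (by linarith) (by linarith) (by linarith [pow_nonneg hr₀ n])

theorem igd_odd_closed_form_lb (μ G η : ℝ) (n K : ℕ) (hμ : 0 < μ) (hG : 0 < G)
    (hn : 2 ≤ n) (hK : 1 ≤ K)
    (h₁ : 1 / (n : ℝ) ≤ η * μ * K) (h₂ : η * μ * K ≤ 1)
    (x : ℝ)
    (hx : x = (1 - η * μ * K) ^ (n * K) * (0 : ℝ) +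
      (G / (μ * K)) * ((1 - (1 - η * μ * K) ^ (n * K)) / (1 - (1 - η * μ * K) ^ n)) *
        (1 - (1 - η * μ * K) ^ (((n : ℝ) - 1) / 2)) ^ 2) :
    x ≥ (G / (μ * K)) * (1 - Real.exp (-1)) * (1 - Real.exp (-(1 / 4))) ^ 2 := by
  set r := 1 - η * μ * K
  have hr₀ : 0 ≤ r := by linarith
  have hr : r ≤ 1 - 1 / n := by linarith
  have hratio := one_sub_exp_neg_one_le_geom_ratio (by omega) hK hr₀ hr
  have hhalf := rpow_half_pred_le_exp_neg_quarter hn hr₀ hr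
  have hquarter : exp (-(1 / 4)) ≤ 1 := exp_le_one_iff.mpr (by norm_num)
  have hratio₀ : 0 ≤ (1 - r ^ (n * K)) / (1 - r ^ n) := by
    linarith [exp_le_one_iff.mpr (by norm_num : (-1 : ℝ) ≤ 0)]
  rw [hx, mul_zero, zero_add, ge_iff_le]
  gcongr
end

section
/- Let n ≥ 3 be an integer, let μ, L' > 0, G > 0, and δ = 2π/n. Define f_1(x,y) = (μ/2)x² + (L'/2)y² − Gx and f_i = f_1 ∘ R_{i−1}^{−1} where R_j is the rotation by angle jδ. Then the average F(x,y) = (1/n)∑_{i=1}^n f_i(x,y) equals ((μ + L')/4)(x² + y²). -/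
/-!
Expanded, each rotated summand is the constant `(μ + L')/4 (x² + y²)` plus first and second
harmonics in `θ_i = i δ`. The sums of `cos kθ_i` and `sin kθ_i` over `i < n` are the real and
imaginary parts of the geometric sum of the root of unity `exp (2π i k / n)`, which vanishes when
`n ∤ k`; for `n ≥ 3` this covers `k = 1, 2`, so only the constant survives the average.
-/

open Finset Real

theorem IsPrimitiveRoot.geom_sum_pow_eq_zero {R : Type*} [CommRing R] [IsDomain R] {ζ : R}
    {n k : ℕ} (hζ : IsPrimitiveRoot ζ n) (hk : ¬ n ∣ k) :
    ∑ i ∈ range n, (ζ ^ k) ^ i = 0 := by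
  have hζk : ζ ^ k - 1 ≠ 0 := sub_ne_zero.mpr fun h ↦ hk ((hζ.pow_eq_one_iff_dvd k).mp h)
  refine (mul_eq_zero.mp ?_).resolve_right hζk
  rw [geom_sum_mul, ← pow_mul, mul_comm, pow_mul, hζ.pow_eq_one, one_pow, sub_self]

theorem Complex.sum_range_exp_mul_I_eq_zero {n k : ℕ} (hk : ¬ n ∣ k) :
    ∑ i ∈ range n, exp (↑(k * (i * (2 * π / n))) * I) = 0 := by
  obtain rfl | hn := eq_or_ne n 0
  · simp
  rw [← (isPrimitiveRoot_exp n hn).geom_sum_pow_eq_zero hk]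
  refine sum_congr rfl fun i _ ↦ ?_
  rw [← exp_nat_mul, ← exp_nat_mul]
  push_cast
  ring_nf

theorem Real.sum_range_cos_mul_eq_zero {n k : ℕ} (hk : ¬ n ∣ k) :
    ∑ i ∈ range n, cos (k * (i * (2 * π / n))) = 0 := by
  have h := congrArg Complex.re (Complex.sum_range_exp_mul_I_eq_zero hk)
  simpa only [Complex.re_sum, Complex.exp_ofReal_mul_I_re, Complex.zero_re] using h

theorem Real.sum_range_sin_mul_eq_zero {n k : ℕ} (hk : ¬ n ∣ k) :
    ∑ i ∈ range n, sin (k * (i * (2 * π / n))) = 0 := by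
  have h := congrArg Complex.im (Complex.sum_range_exp_mul_I_eq_zero hk)
  simpa only [Complex.im_sum, Complex.exp_ofReal_mul_I_im, Complex.zero_im] using h

theorem rotated_quadratic_eq_harmonics (μ L' G x y θ : ℝ) :
    μ / 2 * (x * cos θ + y * sin θ) ^ 2 + L' / 2 * (-x * sin θ + y * cos θ) ^ 2
        - G * (x * cos θ + y * sin θ) =
      (μ + L') / 4 * (x ^ 2 + y ^ 2) + (μ - L') / 4 * (x ^ 2 - y ^ 2) * cos (2 * θ)
        + (μ - L') / 2 * (x * y) * sin (2 * θ) - G * x * cos θ - G * y * sin θ := by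
  rw [cos_two_mul, sin_two_mul]
  linear_combination (μ / 2 * y ^ 2 + L' / 2 * x ^ 2) * sin_sq_add_cos_sq θ

theorem rotated_components_average_general (n : ℕ) (hn : 3 ≤ n) (μ L' G : ℝ)
    (f₁ : ℝ → ℝ → ℝ) (hf₁ : ∀ x y, f₁ x y = (μ / 2) * x ^ 2 + (L' / 2) * y ^ 2 - G * x)
    (δ : ℝ) (hδ : δ = 2 * Real.pi / n) (x y : ℝ) :
    (1 / (n : ℝ)) * ∑ i ∈ Finset.range n,
      f₁ (x * Real.cos (i * δ) + y * Real.sin (i * δ))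
         (-x * Real.sin (i * δ) + y * Real.cos (i * δ)) =
      ((μ + L') / 4) * (x ^ 2 + y ^ 2) := by
  subst hδ
  have h1 : ¬ n ∣ 1 := fun h ↦ by have := Nat.le_of_dvd one_pos h; omega
  have h2 : ¬ n ∣ 2 := fun h ↦ by have := Nat.le_of_dvd two_pos h; omega
  have hc1 := sum_range_cos_mul_eq_zero h1
  have hs1 := sum_range_sin_mul_eq_zero h1
  have hc2 := sum_range_cos_mul_eq_zero h2
  have hs2 := sum_range_sin_mul_eq_zero h2
  push_cast at hc1 hs1 hc2 hs2
  simp only [one_mul] at hc1 hs1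
  simp only [hf₁, rotated_quadratic_eq_harmonics, sum_add_distrib, sum_sub_distrib, ← mul_sum,
    hc1, hs1, hc2, hs2, sum_const, card_range, nsmul_eq_mul]
  have hn0 : (n : ℝ) ≠ 0 := by positivity
  field_simp
  ring

theorem rotated_components_average (n : ℕ) (hn : 3 ≤ n) (μ L' G : ℝ)
    (hμ : 0 < μ) (hL' : 0 < L') (hG : 0 < G)
    (f₁ : ℝ → ℝ → ℝ) (hf₁ : ∀ x y, f₁ x y = (μ / 2) * x ^ 2 + (L' / 2) * y ^ 2 - G * x)
    (δ : ℝ) (hδ : δ = 2 * Real.pi / n) (x y : ℝ) :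
    (1 / (n : ℝ)) * ∑ i ∈ Finset.range n,
      f₁ (x * Real.cos (i * δ) + y * Real.sin (i * δ))
         (-x * Real.sin (i * δ) + y * Real.cos (i * δ)) =
      ((μ + L') / 4) * (x ^ 2 + y ^ 2) :=
  rotated_components_average_general n hn μ L' G f₁ hf₁ δ hδ x y
end

section
/- Let μ, L > 0, L' = L/2, κ = L/μ, δ = 2π/n, n ≥ 3, K ≥ 1 integers with κ ≥ 16πK, G > 0. Define u₀(η) = ηG(ηL' − (1−cos δ))/D(η) and v₀(η) = −ηG sin δ / D(η) where D(η) = (1−cos δ)(2 − (μ+L')η) + η²μL'. Then for all η in [1/(μnK), 2/L), |v₀(η)| ≤ (8πK/κ) u₀(η). -/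
set_option maxHeartbeats 1600000 in
theorem v0_le_u0 (μ L L' G δ : ℝ) (n K : ℕ) (hμ : 0 < μ) (hL : 0 < L)
    (hL' : L' = L / 2) (hG : 0 < G) (hδ : δ = 2 * Real.pi / n)
    (hn : 3 ≤ n) (hK : 1 ≤ K) (hκ : 16 * Real.pi * K ≤ L / μ)
    (D u₀ v₀ : ℝ → ℝ)
    (hD : ∀ η, D η = (1 - Real.cos δ) * (2 - (μ + L') * η) + η ^ 2 * μ * L')
    (hu : ∀ η, u₀ η = η * G * (η * L' - (1 - Real.cos δ)) / D η)
    (hv : ∀ η, v₀ η = -(η * G * Real.sin δ) / D η) :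
    ∀ η ∈ Set.Ico (1 / (μ * n * K)) (2 / L),
      |v₀ η| ≤ (8 * Real.pi * K / (L / μ)) * u₀ η := by
  intro η hη
  obtain ⟨hη1, hη2⟩ := hη
  have hπ := Real.pi_pos
  have hπ4 : Real.pi < 3.15 := Real.pi_lt_d2
  have hπ3 : 3.14 < Real.pi := Real.pi_gt_d6.trans_le' (by norm_num)
  have hn3 : (3 : ℝ) ≤ n := by exact_mod_cast hn
  have hK1 : (1 : ℝ) ≤ K := by exact_mod_cast hK
  have hnpos : (0 : ℝ) < n := by linarith
  have hKpos : (0 : ℝ) < K := by linarith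
  have hμnK : 0 < μ * n * K := by positivity
  have hηpos : 0 < η := lt_of_lt_of_le (by positivity) hη1
  have hδpos : 0 < δ := by rw [hδ]; positivity
  have hδval : δ = 2 * Real.pi / n := hδ
  have hcle : Real.cos δ ≤ 1 := Real.cos_le_one δ
  have hcge : 1 - δ ^ 2 / 2 ≤ Real.cos δ := Real.one_sub_sq_div_two_le_cos
  have hsle : |Real.sin δ| ≤ δ := by
    have := Real.abs_sin_le_abs (x := δ)
    rwa [abs_of_pos hδpos] at this
  have hL'pos : 0 < L' := by rw [hL']; positivity
  have hμL : μ * (16 * Real.pi * K) ≤ L := by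
    have h := (le_div_iff₀ hμ).mp hκ
    linarith
  -- η lower bound rewritten
  have hηL : 1 ≤ η * (μ * n * K) := by
    have := (div_le_iff₀ hμnK).mp hη1
    linarith
  -- 1 - cos δ ≤ η L' / 2
  have hc2 : 1 - Real.cos δ ≤ δ ^ 2 / 2 := by linarith
  have hδ2 : δ ^ 2 / 2 = 2 * Real.pi ^ 2 / n ^ 2 := by
    rw [hδval]; field_simp
  have hηL' : L / (2 * μ * n * K) ≤ η * L' := by
    rw [hL', div_le_iff₀ (by positivity)]
    nlinarith
  have hkey1 : 2 * Real.pi ^ 2 / n ^ 2 ≤ L / (4 * μ * n * K) := by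
    rw [div_le_div_iff₀ (by positivity) (by positivity)]
    have h1 : μ * (16 * Real.pi * ↑K) * ↑n ≤ L * ↑n :=
      mul_le_mul_of_nonneg_right hμL hnpos.le
    have h2 : μ * (16 * Real.pi * ↑K) * ↑n * ↑n ≤ L * ↑n * ↑n :=
      mul_le_mul_of_nonneg_right h1 hnpos.le
    have h3 : Real.pi ≤ 2 * ↑n := by linarith
    nlinarith [h2, h3, mul_pos (mul_pos (mul_pos hπ hμ) hKpos) hnpos]
  have hB : 2 * (L / (4 * μ * ↑n * ↑K)) = L / (2 * μ * ↑n * ↑K) := by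
    field_simp
    ring
  have hcleη : 1 - Real.cos δ ≤ η * L' / 2 := by
    have hhalf : L / (4 * μ * n * K) ≤ η * L' / 2 := by linarith
    calc 1 - Real.cos δ ≤ δ ^ 2 / 2 := hc2
      _ = 2 * Real.pi ^ 2 / n ^ 2 := hδ2
      _ ≤ L / (4 * μ * n * K) := hkey1
      _ ≤ η * L' / 2 := hhalf
  have hA : L / (4 * μ * n * K) ≤ η * L' - (1 - Real.cos δ) := by linarith
  have hApos : 0 < η * L' - (1 - Real.cos δ) := lt_of_lt_of_le (by positivity) hA
  -- D positive
  have hDpos : 0 < D η := by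
    rw [hD]
    have h1 : (μ + L') * η < 2 := by
      have hηlt : η < 2 / L := hη2
      have : (μ + L') * η < (μ + L') * (2 / L) := by
        apply mul_lt_mul_of_pos_left hηlt (by positivity)
      have h2 : (μ + L') * (2 / L) = 2 * μ / L + 1 := by
        rw [hL']; field_simp
      have h3 : 2 * μ / L < 1 := by
        rw [div_lt_one hL]
        have h4 : (3:ℝ) ≤ 16 * Real.pi * K := by
          nlinarith [mul_nonneg (by linarith : (0:ℝ) ≤ Real.pi - 3.14)
            (by linarith : (0:ℝ) ≤ (K:ℝ) - 1)]
        have h5 : 3 * μ ≤ 16 * Real.pi * ↑K * μ :=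
          mul_le_mul_of_nonneg_right h4 hμ.le
        linarith
      linarith
    have : 0 ≤ (1 - Real.cos δ) * (2 - (μ + L') * η) := by
      apply mul_nonneg (by linarith) (by linarith)
    nlinarith [sq_nonneg η, mul_pos (mul_pos (pow_pos hηpos 2) hμ) hL'pos]
  -- key scalar inequality : |sin δ| ≤ (8πK/(L/μ)) (ηL' - (1-cos δ))
  have hkey : |Real.sin δ| ≤ 8 * Real.pi * K / (L / μ) * (η * L' - (1 - Real.cos δ)) := by
    have hLμpos : 0 < L / μ := by positivity
    have h1 : 8 * Real.pi * K / (L / μ) * (L / (4 * μ * n * K)) = 2 * Real.pi / n := by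
      field_simp
      ring
    have h2 : 8 * Real.pi * K / (L / μ) * (L / (4 * μ * n * K))
        ≤ 8 * Real.pi * K / (L / μ) * (η * L' - (1 - Real.cos δ)) := by
      apply mul_le_mul_of_nonneg_left hA (by positivity)
    calc |Real.sin δ| ≤ δ := hsle
      _ = 2 * Real.pi / n := hδval
      _ = 8 * Real.pi * K / (L / μ) * (L / (4 * μ * n * K)) := h1.symm
      _ ≤ _ := h2
  rw [hv, hu]
  rw [abs_div, abs_neg, abs_of_pos hDpos, abs_mul, abs_of_pos (mul_pos hηpos hG)]
  rw [div_le_iff₀ hDpos]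
  have hR : 8 * Real.pi * K / (L / μ) * (η * G * (η * L' - (1 - Real.cos δ)) / D η) * D η
      = η * G * (8 * Real.pi * K / (L / μ) * (η * L' - (1 - Real.cos δ))) := by
    rw [mul_assoc, div_mul_cancel₀ _ hDpos.ne']
    ring
  rw [hR]
  apply mul_le_mul_of_nonneg_left hkey (by positivity)
end

section
/- Let L, G > 0, let n ≥ 4 be even, and let η satisfy ηL ≥ 4/n and ηL ≤ 1. Suppose a sequence satisfies x_{k+1} = (1 + ηL/2)^{n/2}(1 − ηL)^{n/2} x_k + (G/L)[(1 + ηL/2)^{n/2}(1 + (1 − ηL)^{n/2}) − 2] with x_0 = 0. Then x_k ≥ (G/(9L))(1 + ηL/2)^{n/2} for all k ≥ 1. -/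
lemma quad_pow (m : ℕ) (x : ℝ) (hx : 0 ≤ x) :
    1 + (m : ℝ) * x + ((m : ℝ) * ((m : ℝ) - 1) / 2) * x ^ 2 ≤ (1 + x) ^ m := by
  induction m with
  | zero => simp
  | succ k ih =>
    have h1 : (1 + x) ^ (k + 1) = (1 + x) ^ k * (1 + x) := by ring
    push_cast
    rw [h1]
    have hk1 : (0:ℝ) ≤ (k:ℝ) * ((k:ℝ) - 1) := by
      rcases Nat.eq_zero_or_pos k with h | h
      · simp [h]
      · have : (1:ℝ) ≤ (k:ℝ) := by exact_mod_cast h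
        nlinarith
    nlinarith [mul_le_mul_of_nonneg_right ih (by linarith : (0:ℝ) ≤ 1 + x),
      mul_nonneg hk1 (mul_nonneg (mul_nonneg hx hx) hx)]

theorem epoch_recursion_lb (L G η : ℝ) (n : ℕ) (hL : 0 < L) (hG : 0 < G)
    (hn : 4 ≤ n) (hne : Even n) (hηL : 4 / (n : ℝ) ≤ η * L) (hηL' : η * L ≤ 1)
    (x : ℕ → ℝ) (hx0 : x 0 = 0)
    (hrec : ∀ k, x (k + 1) =
      (1 + η * L / 2) ^ (n / 2) * (1 - η * L) ^ (n / 2) * x k +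
        (G / L) * ((1 + η * L / 2) ^ (n / 2) * (1 + (1 - η * L) ^ (n / 2)) - 2)) :
    ∀ k, 1 ≤ k → x k ≥ (G / (9 * L)) * (1 + η * L / 2) ^ (n / 2) := by
  set a := η * L with ha
  have hnpos : (0 : ℝ) < n := by positivity
  have ha0 : 0 < a := lt_of_lt_of_le (by positivity) hηL
  obtain ⟨r, hr⟩ := hne
  have hm : n / 2 = r := by omega
  have hr2 : 2 ≤ r := by omega
  have hR2 : (2 : ℝ) ≤ (r : ℝ) := by exact_mod_cast hr2
  have hR0 : (0 : ℝ) < (r : ℝ) := by linarith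
  have hra : 2 ≤ (r : ℝ) * a := by
    have hn2 : (n : ℝ) = 2 * r := by rw [hr]; push_cast; ring
    rw [hn2, div_le_iff₀ (by linarith)] at hηL
    nlinarith
  have hP : (9 : ℝ) / 4 ≤ (1 + a / 2) ^ r := by
    have := quad_pow r (a / 2) (by linarith)
    nlinarith [this, mul_le_mul_of_nonneg_left hηL' (le_of_lt (mul_pos hR0 ha0)),
      mul_le_mul_of_nonneg_left hra (le_of_lt (mul_pos hR0 ha0))]
  have hQ0 : 0 ≤ (1 - a) ^ r := pow_nonneg (by linarith) r
  have hT : (1 + a / 2) ^ r / 9 ≤ (1 + a / 2) ^ r * (1 + (1 - a) ^ r) - 2 := by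
    nlinarith [mul_nonneg (by positivity : (0:ℝ) ≤ (1 + a / 2) ^ r) hQ0]
  have hGL : 0 < G / L := by positivity
  have hnn : ∀ k, 0 ≤ x k := by
    intro k
    induction k with
    | zero => simp [hx0]
    | succ j ih =>
      rw [hrec j, hm]
      have hc : 0 ≤ (1 + a / 2) ^ r * (1 - a) ^ r := by positivity
      nlinarith [mul_nonneg hc ih, mul_le_mul_of_nonneg_left hT (le_of_lt hGL)]
  intro k hk
  obtain ⟨j, rfl⟩ : ∃ j, k = j + 1 := ⟨k - 1, by omega⟩
  rw [hrec j, hm]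
  have hc : 0 ≤ (1 + a / 2) ^ r * (1 - a) ^ r := by positivity
  have h1 := mul_nonneg hc (hnn j)
  have h2 := mul_le_mul_of_nonneg_left hT (le_of_lt hGL)
  have hGL9 : G / (9 * L) * (1 + a / 2) ^ r = G / L * ((1 + a / 2) ^ r / 9) := by
    field_simp
  rw [hGL9]
  linarith
end
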